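/- arXiv:1903.07156 — 3 statements merged into one kernel-verified Lean document; each statement's English description precedes it below -/
import Mathlib

section
/- Under Assumption x ⪰ 0 (all components of x nonnegative), the set of x ∈ ℝⁿ with x ⪰ 0 for which there exist δ_A ∈ ℝ^{m×n} with ‖δ_A‖_∞ ≤ Δ_A (entrywise) such that ‖Q_y − (Q_A − δ_A)x‖_∞ ≤ Δ_y equals the set of x ⪰ 0 satisfying the linear inequalities (Q_A − Δ_A·𝟙_m𝟙_nᵀ)x ⪯ Q_y + Δ_y·𝟙_m and (−Q_A − Δ_A·𝟙_m𝟙_nᵀ)x ⪯ −Q_y + Δ_y·𝟙_m. -/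
/-! Row by row, `∑ⱼ δᵢⱼ xⱼ` ranges over all of `[-Δ_A S, Δ_A S]` with `S = ∑ⱼ xⱼ` as `δ` ranges
over the entrywise `Δ_A`-ball (for `x ⪰ 0`, a constant row already attains every value).
Feasibility of row `i` thus says that the interval `[-Δ_A S, Δ_A S]` meets the `Δ_y`-ball
around `(Q_A x)ᵢ - (Q_y)ᵢ`, i.e. `|(Q_y)ᵢ - (Q_A x)ᵢ| ≤ Δ_A S + Δ_y`, and the two sides of
this absolute value inequality are the two linear inequalities. -/

open Finset Matrix

section OrderedField

variable {K : Type*} [Field K] [LinearOrder K] [IsStrictOrderedRing K]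

theorem exists_abs_le_abs_sub_le {r ε u : K} (hr : 0 ≤ r) (hε : 0 ≤ ε) (hu : |u| ≤ r + ε) :
    ∃ t, |t| ≤ r ∧ |u - t| ≤ ε := by
  obtain ⟨hu₁, hu₂⟩ := abs_le.1 hu
  rcases le_total u r with hur | hru
  · rcases le_total (-r) u with hru' | hur'
    · exact ⟨u, abs_le.2 ⟨hru', hur⟩, by simpa using hε⟩
    · exact ⟨-r, by rw [abs_neg, abs_of_nonneg hr], abs_le.2 ⟨by linarith, by linarith⟩⟩
  · exact ⟨r, (abs_of_nonneg hr).le, abs_le.2 ⟨by linarith, by linarith⟩⟩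

theorem exists_abs_le_mul_eq {Δ S t : K} (hΔ : 0 ≤ Δ) (hS : 0 ≤ S) (ht : |t| ≤ Δ * S) :
    ∃ c, |c| ≤ Δ ∧ c * S = t := by
  rcases hS.eq_or_lt with rfl | hS
  · exact ⟨0, by simpa using hΔ, by simpa [eq_comm] using ht⟩
  · refine ⟨t / S, ?_, div_mul_cancel₀ t hS.ne'⟩
    rwa [abs_div, abs_of_pos hS, div_le_iff₀ hS]

end OrderedField

section WeightedSums

variable {ι : Type*} [Fintype ι] {x : ι → ℝ} {Δ : ℝ}

theorem abs_sum_mul_le (hx : ∀ j, 0 ≤ x j) {d : ι → ℝ} (hd : ∀ j, |d j| ≤ Δ) :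
    |∑ j, d j * x j| ≤ Δ * ∑ j, x j := by
  rw [mul_sum]
  refine (abs_sum_le_sum_abs _ _).trans (sum_le_sum fun j _ => ?_)
  rw [abs_mul, abs_of_nonneg (hx j)]
  exact mul_le_mul_of_nonneg_right (hd j) (hx j)

theorem exists_bounded_perturbation_iff (hx : ∀ j, 0 ≤ x j) (hΔ : 0 ≤ Δ) {ε : ℝ} (hε : 0 ≤ ε)
    (a : ι → ℝ) (q : ℝ) :
    (∃ d : ι → ℝ, (∀ j, |d j| ≤ Δ) ∧ |q - ∑ j, (a j - d j) * x j| ≤ ε) ↔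
      |q - ∑ j, a j * x j| ≤ Δ * ∑ j, x j + ε := by
  have hsplit : ∀ d : ι → ℝ, ∑ j, (a j - d j) * x j = ∑ j, a j * x j - ∑ j, d j * x j := by
    simp [sub_mul, sum_sub_distrib]
  constructor
  · rintro ⟨d, hd, hfeas⟩
    rw [hsplit] at hfeas
    calc |q - ∑ j, a j * x j|
        = |(q - (∑ j, a j * x j - ∑ j, d j * x j)) - ∑ j, d j * x j| := by ring_nf
      _ ≤ |q - (∑ j, a j * x j - ∑ j, d j * x j)| + |∑ j, d j * x j| := abs_sub _ _
      _ ≤ Δ * ∑ j, x j + ε := by linarith [abs_sum_mul_le hx hd]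
  · intro h
    have hS : 0 ≤ ∑ j, x j := sum_nonneg fun j _ => hx j
    obtain ⟨t, ht, hut⟩ := exists_abs_le_abs_sub_le (mul_nonneg hΔ hS) hε h
    obtain ⟨c, hc, hcS⟩ := exists_abs_le_mul_eq hΔ hS (t := -t) (by rwa [abs_neg])
    refine ⟨fun _ => c, fun _ => hc, ?_⟩
    rw [hsplit, ← mul_sum, hcS]
    rwa [sub_neg_eq_add, ← sub_sub]

end WeightedSums

theorem lp_reformulation (m n : ℕ) (QA : Matrix (Fin m) (Fin n) ℝ)
    (Qy : Fin m → ℝ) (ΔA Δy : ℝ) (hΔA : 0 < ΔA) (hΔy : 0 < Δy) :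
    {x : Fin n → ℝ | (∀ j, 0 ≤ x j) ∧
        ∃ δ : Matrix (Fin m) (Fin n) ℝ, (∀ i j, |δ i j| ≤ ΔA) ∧
          ∀ i, |Qy i - ((QA - δ).mulVec x) i| ≤ Δy} =
      {x : Fin n → ℝ | (∀ j, 0 ≤ x j) ∧
        (∀ i, ∑ j, (QA i j - ΔA) * x j ≤ Qy i + Δy) ∧
        (∀ i, ∑ j, (-QA i j - ΔA) * x j ≤ -Qy i + Δy)} := by
  ext x
  refine and_congr_right fun hx => ?_
  have hrows : (∃ δ : Matrix (Fin m) (Fin n) ℝ, (∀ i j, |δ i j| ≤ ΔA) ∧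
      ∀ i, |Qy i - ((QA - δ).mulVec x) i| ≤ Δy) ↔
      ∀ i, ∃ d : Fin n → ℝ, (∀ j, |d j| ≤ ΔA) ∧ |Qy i - ∑ j, (QA i j - d j) * x j| ≤ Δy := by
    simp only [Classical.skolem (b := fun _ => Fin n → ℝ), ← forall_and, mulVec, dotProduct,
      Matrix.sub_apply]
    rfl
  rw [hrows]
  simp only [exists_bounded_perturbation_iff hx hΔA.le hΔy.le]
  simp only [abs_le, ← forall_and]
  refine forall_congr' fun i => ?_
  simp only [sub_mul, neg_mul, sum_sub_distrib, sum_neg_distrib, ← mul_sum]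
  constructor <;> rintro ⟨h₁, h₂⟩ <;> constructor <;> linarith
end

section
/- Let Q_A ∈ ℝ^{m×n}, Q_y ∈ ℝ^m, Δ_A, Δ_y > 0, and x ∈ ℝⁿ with x ⪰ 0. If Q_A·x − Δ_A·(𝟙_nᵀx)·𝟙_m ⪯ Q_y + Δ_y·𝟙_m and −Q_A·x − Δ_A·(𝟙_nᵀx)·𝟙_m ⪯ −Q_y + Δ_y·𝟙_m, then there exists δ_A ∈ ℝ^{m×n} with |（δ_A)_{ij}| ≤ Δ_A for all i,j such that ‖Q_y − (Q_A − δ_A)·x‖_∞ ≤ Δ_y. -/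
/-! Let `r = Q_A x - Q_y` and `S = 𝟙ᵀx`, which is `≥ 0` since `x ⪰ 0`. The hypotheses say exactly
`|r_i| ≤ Δ_A S + Δ_y`, so clamping `r_i` to `[-Δ_A S, Δ_A S]` splits it as `r_i = t_i S + e_i` with
`|t_i| ≤ Δ_A` and `|e_i| ≤ Δ_y`. The perturbation with constant rows `δ_ij = t_i` has `δ x = t S`,
so the residual `Q_y - (Q_A - δ) x` is `-e`. -/

open Finset Matrix

lemma exists_abs_le_abs_sub_le_s8 {K : Type*} [Field K] [LinearOrder K] [IsStrictOrderedRing K]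
    {r A B : K} (hA : 0 ≤ A) (hB : 0 ≤ B) (hr : |r| ≤ A + B) :
    ∃ p, |p| ≤ A ∧ |r - p| ≤ B := by
  rw [abs_le] at hr
  rcases le_total r (-A) with hlow | hlow
  · exact ⟨-A, by rw [abs_neg, abs_of_nonneg hA], abs_le.2 ⟨by linarith, by linarith⟩⟩
  rcases le_total r A with hhigh | hhigh
  · exact ⟨r, abs_le.2 ⟨hlow, hhigh⟩, by simpa using hB⟩
  · exact ⟨A, (abs_of_nonneg hA).le, abs_le.2 ⟨by linarith, by linarith⟩⟩

lemma exists_abs_le_abs_sub_mul_le {K : Type*} [Field K] [LinearOrder K] [IsStrictOrderedRing K]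
    {r a b S : K} (ha : 0 ≤ a) (hb : 0 ≤ b) (hS : 0 ≤ S)
    (hr : |r| ≤ a * S + b) : ∃ t, |t| ≤ a ∧ |r - t * S| ≤ b := by
  rcases hS.eq_or_lt with rfl | hS
  · exact ⟨0, by simpa using ha, by simpa using hr⟩
  obtain ⟨p, hp, hrp⟩ := exists_abs_le_abs_sub_le_s8 (mul_nonneg ha hS.le) hb hr
  refine ⟨p / S, ?_, ?_⟩
  · rwa [abs_div, abs_of_pos hS, div_le_iff₀ hS]
  · rwa [div_mul_cancel₀ p hS.ne']

lemma mulVec_of_const_row {R m n : Type*} [NonUnitalNonAssocSemiring R] [Fintype n]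
    (t : m → R) (x : n → R) (i : m) :
    ((of fun i (_ : n) => t i) *ᵥ x) i = t i * ∑ j, x j := by
  simp only [mulVec, dotProduct, of_apply, mul_sum]

theorem lp_to_perturbation (m n : ℕ) (QA : Matrix (Fin m) (Fin n) ℝ)
    (Qy : Fin m → ℝ) (ΔA Δy : ℝ) (hΔA : 0 < ΔA) (hΔy : 0 < Δy)
    (x : Fin n → ℝ) (hx : ∀ j, 0 ≤ x j)
    (h1 : ∀ i, QA.mulVec x i - ΔA * (∑ j, x j) ≤ Qy i + Δy)
    (h2 : ∀ i, -QA.mulVec x i - ΔA * (∑ j, x j) ≤ -Qy i + Δy) :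
    ∃ δ : Matrix (Fin m) (Fin n) ℝ, (∀ i j, |δ i j| ≤ ΔA) ∧
      ∀ i, |Qy i - ((QA - δ).mulVec x) i| ≤ Δy := by
  have hS : 0 ≤ ∑ j, x j := sum_nonneg fun j _ => hx j
  have hres : ∀ i, |(QA *ᵥ x) i - Qy i| ≤ ΔA * ∑ j, x j + Δy := fun i =>
    abs_le.2 ⟨by linarith [h2 i], by linarith [h1 i]⟩
  choose t ht hrt using fun i => exists_abs_le_abs_sub_mul_le hΔA.le hΔy.le hS (hres i)
  refine ⟨of fun i _ => t i, fun i _ => ht i, fun i => ?_⟩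
  have hflip : Qy i - ((QA *ᵥ x) i - t i * ∑ j, x j) = -((QA *ᵥ x) i - Qy i - t i * ∑ j, x j) := by
    ring
  rw [sub_mulVec, Pi.sub_apply, mulVec_of_const_row, hflip, abs_neg]
  exact hrt i
end

section
/- Let α, x̂ ∈ ℝⁿ, S the support of α with |S| = k, and w = x̂ − α. Let c₁ ≥ 0 and c₂ ≥ 0 be constants such that |w_i| ≤ c₁ + c₂·‖w‖₁ for every i, and suppose ‖x̂‖₁ − ‖α‖₁ ≤ 0. Then ‖w‖₁ ≤ 2·∑_{h∈S}|w_h| ≤ 2k·(c₁ + c₂·‖w‖₁); hence if 2k·c₂ < 1, then ‖w‖₁ ≤ 2k·c₁/(1 − 2k·c₂). -/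
open Finset

theorem l1_error_from_componentwise (n k : ℕ) (α xhat : Fin n → ℝ)
    (hk : (Finset.univ.filter (fun i => α i ≠ 0)).card = k)
    (c₁ c₂ : ℝ) (hc₁ : 0 ≤ c₁) (hc₂ : 0 ≤ c₂)
    (hcomp : ∀ i, |xhat i - α i| ≤ c₁ + c₂ * ∑ j, |xhat j - α j|)
    (hmin : ∑ i, |xhat i| - ∑ i, |α i| ≤ 0) :
    (∑ i, |xhat i - α i| ≤
        2 * ∑ i ∈ Finset.univ.filter (fun i => α i ≠ 0), |xhat i - α i|) ∧
      (2 * ∑ i ∈ Finset.univ.filter (fun i => α i ≠ 0), |xhat i - α i| ≤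
        2 * k * (c₁ + c₂ * ∑ j, |xhat j - α j|)) ∧
      (2 * k * c₂ < 1 →
        ∑ i, |xhat i - α i| ≤ 2 * k * c₁ / (1 - 2 * k * c₂)) := by
  set S := Finset.univ.filter (fun i => α i ≠ 0) with hS
  set W := ∑ j, |xhat j - α j| with hW
  -- part 1
  have h1 : W ≤ 2 * ∑ i ∈ S, |xhat i - α i| := by
    have hsplit : ∀ i : Fin n, |xhat i - α i| - (if i ∈ S then 2 * |xhat i - α i| else 0)
        ≤ |xhat i| - |α i| := by
      intro i
      by_cases h : i ∈ S
      · simp only [h, if_true]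
        nlinarith [abs_sub_abs_le_abs_sub (α i) (xhat i), abs_sub_comm (α i) (xhat i),
          abs_nonneg (xhat i - α i)]
      · have : α i = 0 := by simpa [hS] using h
        simp [h, this]
    have hsum := Finset.sum_le_sum (fun i _ => hsplit i) (s := Finset.univ)
    simp only [Finset.sum_sub_distrib] at hsum
    rw [Finset.sum_ite_mem, Finset.univ_inter] at hsum
    rw [Finset.mul_sum]
    linarith
  have hWnn : 0 ≤ W := Finset.sum_nonneg fun i _ => abs_nonneg _
  have h2 : 2 * ∑ i ∈ S, |xhat i - α i| ≤ 2 * k * (c₁ + c₂ * W) := by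
    have : ∑ i ∈ S, |xhat i - α i| ≤ ∑ i ∈ S, (c₁ + c₂ * W) :=
      Finset.sum_le_sum fun i _ => hcomp i
    rw [Finset.sum_const, hk, nsmul_eq_mul] at this
    nlinarith
  refine ⟨h1, h2, fun hlt => ?_⟩
  have hW2 : W ≤ 2 * k * (c₁ + c₂ * W) := le_trans h1 h2
  rw [le_div_iff₀ (by linarith)]
  nlinarith
end
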